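/- arXiv:0804.2401 — 7 statements merged into one kernel-verified Lean document; each statement's English description precedes it below -/
import Mathlib

section
/- Let G = (U, E) be an undirected graph and V a nonempty subset of U. Define the graph G' = (V, E') where (α, β) ∈ E' iff there is a path from α to β in G whose internal vertices all lie in U \ V. Then for any α, β ∈ V and any C ⊆ V (with α, β ∉ C and α ≠ β), C separates α from β in G if and only if C separates α from β in G'. -/
/-!
An edge of `G'` is a `G`-walk whose interior avoids `V`, so a `G'`-walk expands into a `G`-walk
visiting the same vertices of `V`; conversely, a `G`-walk between vertices of `V`, cut at its
visits to `V`, becomes a `G'`-walk through a subset of its vertices. As `C ⊆ V`, whether a walk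
meets `C` depends only on the vertices of `V` it visits.
-/

/-- `C` separates `A` from `B` in the undirected graph `G`: every path (walk)
from a vertex of `A` to a vertex of `B` contains a vertex of `C`. -/
def Separates {U : Type} (G : SimpleGraph U) (A C B : Set U) : Prop :=
  ∀ a ∈ A, ∀ b ∈ B, ∀ p : G.Walk a b, ∃ w ∈ p.support, w ∈ C

namespace SimpleGraph

variable {U : Type*} {G : SimpleGraph U} {V : Set U}

theorem Walk.mem_support_iff_eq_or_mem_internal {u v w : U} (p : G.Walk u v) :
    w ∈ p.support ↔ w = u ∨ w ∈ p.support.tail.dropLast ∨ w = v := by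
  cases p with
  | nil => simp
  | cons h q =>
    have hq : w ∈ q.support ↔ w ∈ q.support.dropLast ∨ w = v := by
      conv_lhs => rw [← List.dropLast_append_getLast q.support_ne_nil, q.getLast_support]
      rw [List.mem_append, List.mem_singleton]
    simp [hq]

theorem Walk.tail_dropLast_support_reverse {u v : U} (p : G.Walk u v) :
    p.reverse.support.tail.dropLast = p.support.tail.dropLast.reverse := by
  rw [support_reverse, List.tail_reverse, List.dropLast_reverse, List.tail_dropLast]

/-- The torso of `V` in `G`, the graph `G'` of the statement. -/
def torso (G : SimpleGraph U) (V : Set U) : SimpleGraph U where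
  Adj a b := a ∈ V ∧ b ∈ V ∧ a ≠ b ∧ ∃ p : G.Walk a b, ∀ w ∈ p.support.tail.dropLast, w ∉ V
  symm.symm := by
    rintro a b ⟨ha, hb, hab, p, hp⟩
    refine ⟨hb, ha, hab.symm, p.reverse, fun w hw => hp w ?_⟩
    rwa [p.tail_dropLast_support_reverse, List.mem_reverse] at hw
  loopless.irrefl _ h := h.2.2.1 rfl

@[simp]
theorem torso_adj {a b : U} : (G.torso V).Adj a b ↔
    a ∈ V ∧ b ∈ V ∧ a ≠ b ∧ ∃ p : G.Walk a b, ∀ w ∈ p.support.tail.dropLast, w ∉ V :=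
  Iff.rfl

theorem exists_walk_of_torso_walk {a b : U} (p : (G.torso V).Walk a b) :
    ∃ q : G.Walk a b, ∀ w ∈ q.support, w ∈ V → w ∈ p.support := by
  induction p with
  | nil => exact ⟨.nil, by simp⟩
  | cons h p ih =>
    obtain ⟨-, -, -, r, hr⟩ := torso_adj.1 h
    obtain ⟨q, hq⟩ := ih
    refine ⟨r.append q, fun w hw hwV => ?_⟩
    rw [Walk.support_append, List.mem_append] at hw
    rcases hw with hw | hw
    · rcases r.mem_support_iff_eq_or_mem_internal.1 hw with rfl | hw | rfl
      · simp
      · exact absurd hwV (hr w hw)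
      · simp
    · simp [hq w (List.mem_of_mem_tail hw) hwV]

/-- `r` is the stretch of the walk already travelled since its last visit to `V`, at `a'`. -/
theorem exists_torso_walk_of_prefix {a b : U} (p : G.Walk a b) (hb : b ∈ V) {a' : U}
    (ha' : a' ∈ V) (r : G.Walk a' a) (hr : ∀ w ∈ r.support.tail, w ∉ V) :
    ∃ q : (G.torso V).Walk a' b, q.support ⊆ a' :: p.support := by
  induction p generalizing a' with
  | @nil a =>
    by_cases h : a' = a
    · subst h
      exact ⟨.nil, by simp⟩
    · have hadj : (G.torso V).Adj a' a :=
        ⟨ha', hb, h, r, fun w hw => hr w (List.mem_of_mem_dropLast hw)⟩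
      exact ⟨hadj.toWalk, by simp⟩
  | @cons a c b h p ih =>
    have hr' : (r.concat h).support.tail = r.support.tail ++ [c] := by
      rw [Walk.support_concat, List.tail_append_of_ne_nil r.support_ne_nil]
    by_cases hc : c ∈ V
    · obtain ⟨q, hq⟩ := ih hb hc .nil (by simp)
      have hq' : q.support ⊆ (p.cons h).support :=
        List.Subset.trans hq <| List.Subset.trans
          (List.cons_subset.2 ⟨p.start_mem_support, List.Subset.refl _⟩) (List.subset_cons_self _ _)
      by_cases hac : a' = c
      · subst hac
        exact ⟨q, List.subset_cons_of_subset _ hq'⟩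
      · have hadj : (G.torso V).Adj a' c := ⟨ha', hc, hac, r.concat h, by simpa [hr'] using hr⟩
        exact ⟨.cons hadj q, List.cons_subset_cons _ hq'⟩
    · have hr'' : ∀ w ∈ (r.concat h).support.tail, w ∉ V := by
        rw [hr']
        exact List.forall_mem_append.2 ⟨hr, by simpa using hc⟩
      obtain ⟨q, hq⟩ := ih hb ha' (r.concat h) hr''
      exact ⟨q, List.Subset.trans hq (List.cons_subset_cons _ (List.subset_cons_self _ _))⟩

theorem exists_torso_walk_of_walk {a b : U} (p : G.Walk a b) (ha : a ∈ V) (hb : b ∈ V) :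
    ∃ q : (G.torso V).Walk a b, q.support ⊆ p.support := by
  obtain ⟨q, hq⟩ := exists_torso_walk_of_prefix p hb ha .nil (by simp)
  exact ⟨q, List.Subset.trans hq (List.cons_subset.2 ⟨p.start_mem_support, List.Subset.refl _⟩)⟩

end SimpleGraph

theorem stmt1_general {U : Type} (G : SimpleGraph U) (V : Set U)
    (G' : SimpleGraph U)
    (hG' : ∀ α β : U, G'.Adj α β ↔ α ∈ V ∧ β ∈ V ∧ α ≠ β ∧
      ∃ p : G.Walk α β, ∀ w ∈ p.support.tail.dropLast, w ∉ V)
    (α β : U) (hα : α ∈ V) (hβ : β ∈ V)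
    (C : Set U) (hC : C ⊆ V) :
    Separates G {α} C {β} ↔ Separates G' {α} C {β} := by
  obtain rfl : G' = G.torso V := SimpleGraph.ext <| funext₂ fun a b => propext (hG' a b)
  constructor
  · rintro hsep _ rfl _ rfl p
    obtain ⟨q, hq⟩ := SimpleGraph.exists_walk_of_torso_walk p
    obtain ⟨w, hw, hwC⟩ := hsep _ rfl _ rfl q
    exact ⟨w, hq w hw (hC hwC), hwC⟩
  · rintro hsep _ rfl _ rfl p
    obtain ⟨q, hq⟩ := SimpleGraph.exists_torso_walk_of_walk p hα hβ
    obtain ⟨w, hw, hwC⟩ := hsep _ rfl _ rfl q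
    exact ⟨w, hq hw, hwC⟩

theorem stmt1 {U : Type} [Fintype U] (G : SimpleGraph U) (V : Set U)
    (hV : V.Nonempty) (G' : SimpleGraph U)
    (hG' : ∀ α β : U, G'.Adj α β ↔ α ∈ V ∧ β ∈ V ∧ α ≠ β ∧
      ∃ p : G.Walk α β, ∀ w ∈ p.support.tail.dropLast, w ∉ V)
    (α β : U) (hα : α ∈ V) (hβ : β ∈ V) (hαβ : α ≠ β)
    (C : Set U) (hC : C ⊆ V) (hαC : α ∉ C) (hβC : β ∉ C) :
    Separates G {α} C {β} ↔ Separates G' {α} C {β} :=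
  stmt1_general G V G' hG' α β hα hβ C hC
end

section
/- If M is a graph-isomorph on a finite set U and V is a nonempty subset of U, then the restriction M|_V = {(A,C,B) ∈ M : A, B, C ⊆ V} is a graph-isomorph on V. -/
/-- The sub-independency model `M|_V`. -/
def Restrict {U : Type} (M : Set U → Set U → Set U → Prop) (V : Set U)
    (A C B : Set U) : Prop :=
  M A C B ∧ A ⊆ V ∧ C ⊆ V ∧ B ⊆ V

/-- `M` is a graph-isomorph on the carrier `W ⊆ U`: there is an undirected
graph on `W` such that `(A,C,B) ∈ M` iff `A,B,C` are pairwise disjoint subsets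
of `W` and `C` separates `A` from `B` in the graph. -/
def IsGraphIsomorphOn {U : Type} (W : Set U) (M : Set U → Set U → Set U → Prop) : Prop :=
  ∃ G : SimpleGraph W, ∀ A C B : Set U,
    M A C B ↔ A ⊆ W ∧ C ⊆ W ∧ B ⊆ W ∧ Disjoint A B ∧ Disjoint A C ∧ Disjoint B C ∧
      Separates G (Subtype.val ⁻¹' A) (Subtype.val ⁻¹' C) (Subtype.val ⁻¹' B)

namespace SimpleGraph

section Eliminate

variable {α β : Type*} (G : SimpleGraph α) (f : β → α)

def eliminate : SimpleGraph β where
  Adj u v := u ≠ v ∧ ∃ p : G.Walk (f u) (f v),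
    ∀ w ∈ p.support, w ∈ Set.range f → w = f u ∨ w = f v
  symm := ⟨by
    rintro u v ⟨hne, p, hp⟩
    refine ⟨hne.symm, p.reverse, fun w hw hwf => ?_⟩
    rw [Walk.support_reverse, List.mem_reverse] at hw
    exact (hp w hw hwf).symm⟩
  loopless := ⟨fun _ h => h.1 rfl⟩

def ReachesOffRange (u : β) (s : α) : Prop :=
  ∃ r : G.Walk (f u) s, ∀ w ∈ r.support, w ∈ Set.range f → w = f u

variable {G f}

theorem Walk.exists_lift_of_eliminate {u v : β} (q : (G.eliminate f).Walk u v) :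
    ∃ p : G.Walk (f u) (f v), ∀ w ∈ p.support, w ∈ Set.range f → ∃ x ∈ q.support, f x = w := by
  induction q with
  | nil =>
    refine ⟨Walk.nil, fun w hw _ => ⟨_, Walk.start_mem_support _, ?_⟩⟩
    rw [Walk.support_nil, List.mem_singleton] at hw
    exact hw.symm
  | @cons u u' v h q ih =>
    obtain ⟨p₁, hp₁⟩ := h.2
    obtain ⟨p₂, hp₂⟩ := ih
    refine ⟨p₁.append p₂, fun w hw hwf => ?_⟩
    rcases (Walk.mem_support_append_iff p₁ p₂).1 hw with hw | hw
    · rcases hp₁ w hw hwf with rfl | rfl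
      · exact ⟨u, by simp, rfl⟩
      · exact ⟨u', by simp, rfl⟩
    · obtain ⟨x, hxq, rfl⟩ := hp₂ w hw hwf
      exact ⟨x, by simp [hxq], rfl⟩

theorem ReachesOffRange.refl (u : β) : G.ReachesOffRange f u (f u) :=
  ⟨Walk.nil, fun w hw _ => by simpa using hw⟩

theorem ReachesOffRange.eq_of_injective (hf : Function.Injective f) {u v : β}
    (h : G.ReachesOffRange f u (f v)) : u = v := by
  obtain ⟨r, hr⟩ := h
  exact (hf (hr _ r.end_mem_support ⟨v, rfl⟩)).symm

theorem ReachesOffRange.step {u : β} {s t : α} (h : G.ReachesOffRange f u s)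
    (hst : G.Adj s t) :
    G.ReachesOffRange f u t ∨ ∃ u', t = f u' ∧ (G.eliminate f).Adj u u' := by
  obtain ⟨r, hr⟩ := h
  have hr' : ∀ w ∈ (r.concat hst).support, w ∈ Set.range f → w = f u ∨ w = t := by
    intro w hw hwf
    rw [Walk.support_concat, List.mem_append, List.mem_singleton] at hw
    exact hw.imp (hr w · hwf) id
  by_cases ht : t ∈ Set.range f
  · obtain ⟨u', rfl⟩ := ht
    by_cases hu : u = u'
    · exact .inl (hu ▸ .refl u)
    · exact .inr ⟨u', rfl, hu, r.concat hst, hr'⟩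
  · refine .inl ⟨r.concat hst, fun w hw hwf => (hr' w hw hwf).resolve_right ?_⟩
    rintro rfl
    exact ht hwf

theorem Walk.exists_eliminate_walk_of_reachesOffRange (hf : Function.Injective f) {s e : α}
    (p : G.Walk s e) {u v : β} (he : e = f v) (hu : G.ReachesOffRange f u s) :
    ∃ q : (G.eliminate f).Walk u v, ∀ x ∈ q.support, x = u ∨ f x ∈ p.support := by
  induction p generalizing u with
  | nil =>
    subst he
    obtain rfl := hu.eq_of_injective hf
    exact ⟨Walk.nil, fun x hx => .inl (by simpa using hx)⟩
  | cons hst p ih =>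
    rcases hu.step hst with hu' | ⟨u', rfl, hadj⟩
    · obtain ⟨q, hq⟩ := ih he hu'
      exact ⟨q, fun x hx => (hq x hx).imp_right fun h => by simp [h]⟩
    · obtain ⟨q, hq⟩ := ih he (.refl u')
      refine ⟨.cons hadj q, fun x hx => ?_⟩
      rw [Walk.support_cons, List.mem_cons] at hx
      rcases hx with rfl | hx
      · exact .inl rfl
      · rcases hq x hx with rfl | h
        · exact .inr (by simp)
        · exact .inr (by simp [h])

theorem Walk.exists_eliminate_walk (hf : Function.Injective f) {u v : β}
    (p : G.Walk (f u) (f v)) :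
    ∃ q : (G.eliminate f).Walk u v, ∀ x ∈ q.support, f x ∈ p.support := by
  obtain ⟨q, hq⟩ := p.exists_eliminate_walk_of_reachesOffRange hf rfl (.refl u)
  refine ⟨q, fun x hx => ?_⟩
  rcases hq x hx with rfl | h
  · exact p.start_mem_support
  · exact h

end Eliminate

theorem separates_eliminate_iff {α β : Type} {G : SimpleGraph α} {f : β → α}
    (hf : Function.Injective f) {A C B : Set α} (hA : A ⊆ Set.range f) (hC : C ⊆ Set.range f)
    (hB : B ⊆ Set.range f) :
    Separates (G.eliminate f) (f ⁻¹' A) (f ⁻¹' C) (f ⁻¹' B) ↔ Separates G A C B := by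
  constructor
  · rintro hsep _ ha _ hb p
    obtain ⟨a, rfl⟩ := hA ha
    obtain ⟨b, rfl⟩ := hB hb
    obtain ⟨q, hq⟩ := p.exists_eliminate_walk hf
    obtain ⟨x, hxq, hxC⟩ := hsep a ha b hb q
    exact ⟨f x, hq x hxq, hxC⟩
  · rintro hsep a ha b hb q
    obtain ⟨p, hp⟩ := q.exists_lift_of_eliminate
    obtain ⟨w, hwp, hwC⟩ := hsep _ ha _ hb p
    obtain ⟨x, hxq, rfl⟩ := hp w hwp (hC hwC)
    exact ⟨x, hxq, hwC⟩

end SimpleGraph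

theorem stmt2_general {U : Type} (M : Set U → Set U → Set U → Prop)
    (V : Set U) (h : IsGraphIsomorphOn Set.univ M) :
    IsGraphIsomorphOn V (Restrict M V) := by
  obtain ⟨G, hG⟩ := h
  have hf := Set.inclusion_injective (Set.subset_univ V)
  have hrange {X : Set U} (hX : X ⊆ V) :
      Subtype.val ⁻¹' X ⊆ Set.range (Set.inclusion (Set.subset_univ V)) :=
    fun x hx => ⟨⟨x, hX hx⟩, rfl⟩
  refine ⟨G.eliminate (Set.inclusion (Set.subset_univ V)), fun A C B => ?_⟩
  rw [Restrict, hG]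
  constructor
  · rintro ⟨⟨-, -, -, hAB, hAC, hBC, hsep⟩, hA, hC, hB⟩
    exact ⟨hA, hC, hB, hAB, hAC, hBC,
      (SimpleGraph.separates_eliminate_iff hf (hrange hA) (hrange hC) (hrange hB)).2 hsep⟩
  · rintro ⟨hA, hC, hB, hAB, hAC, hBC, hsep⟩
    exact ⟨⟨Set.subset_univ A, Set.subset_univ C, Set.subset_univ B, hAB, hAC, hBC,
      (SimpleGraph.separates_eliminate_iff hf (hrange hA) (hrange hC) (hrange hB)).1 hsep⟩,
      hA, hC, hB⟩

/-- The restriction of a graph-isomorph on `U` to a nonempty `V ⊆ U` is a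
graph-isomorph on `V`. -/
theorem stmt2 {U : Type} [Fintype U] (M : Set U → Set U → Set U → Prop)
    (V : Set U) (hV : V.Nonempty) (h : IsGraphIsomorphOn Set.univ M) :
    IsGraphIsomorphOn V (Restrict M V) :=
  stmt2_general M V h
end

section
/- In a directed acyclic graph D on vertex set U, for any two distinct vertices α and β, there is an edge between α and β (in either direction) if and only if no subset C of U \ {α, β} d-separates {α} from {β}. -/
/-- A directed graph. -/
structure DiGr (U : Type) where
  Adj : U → U → Prop

/-- Undirected adjacency induced by a directed graph. -/
def DiGr.UAdj {U : Type} (D : DiGr U) (a b : U) : Prop := D.Adj a b ∨ D.Adj b a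

/-- `b` is `a` itself or a descendant of `a`. -/
def DiGr.Reaches {U : Type} (D : DiGr U) : U → U → Prop := Relation.ReflTransGen D.Adj

/-- Acyclicity of a directed graph. -/
def DiGr.Acyclic {U : Type} (D : DiGr U) : Prop := ∀ a, ¬ Relation.TransGen D.Adj a a

/-- A path in the underlying undirected graph of `D`, given as its list of
(distinct) vertices, consecutive ones being adjacent. -/
def IsUPath {U : Type} (D : DiGr U) (p : List U) : Prop :=
  p.Chain' D.UAdj ∧ p.Nodup

/-- The internal node at position `i+1` of the path `p` has converging arrows. -/
def ColliderAt {U : Type} (D : DiGr U) (p : List U) (i : ℕ) : Prop :=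
  ∃ a w b, p[i]? = some a ∧ p[i + 1]? = some w ∧ p[i + 2]? = some b ∧
    D.Adj a w ∧ D.Adj b w

/-- The path `p` is blocked by `C` at the internal node in position `i+1`:
either that node is a collider and neither it nor any of its descendants is in
`C`, or it is a non-collider belonging to `C`. -/
def BlockedAt {U : Type} (D : DiGr U) (C : Set U) (p : List U) (i : ℕ) : Prop :=
  ∃ w, p[i + 1]? = some w ∧ i + 2 < p.length ∧
    ((ColliderAt D p i ∧ ∀ d, D.Reaches w d → d ∉ C) ∨ (¬ ColliderAt D p i ∧ w ∈ C))

/-- `C` d-separates `A` from `B` in `D`: every path between a node of `A` and a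
node of `B` is blocked by `C`. -/
def DSep {U : Type} (D : DiGr U) (A C B : Set U) : Prop :=
  ∀ p : List U, IsUPath D p → (∃ a ∈ A, p.head? = some a) →
    (∃ b ∈ B, p.getLast? = some b) → ∃ i, BlockedAt D C p i

/-- `(A,C,B)` belongs to the causal model of `D`: the three sets are pairwise
disjoint and `C` d-separates `A` from `B`. -/
def InCausal {U : Type} (D : DiGr U) (A C B : Set U) : Prop :=
  Disjoint A B ∧ Disjoint A C ∧ Disjoint B C ∧ DSep D A C B


/-
If `α` and `β` are not adjacent, then one of them, say `α`, is not an ancestor of the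
other, and the parents of `α` d-separate `α` from `β`. Follow a path from `α` to `β`: if its
first edge points into `α`, the second vertex is a parent of `α` and a non-collider. Otherwise
walk forward along the edges pointing away from `α`; since `β` is not a descendant of `α`, some
edge on the way points back, and its head is a collider all of whose descendants are
descendants of `α`, hence (by acyclicity) not parents of `α`. Conversely, the path `α β`
of an edge has no internal vertex, so nothing blocks it.
-/

namespace DiGr

variable {U : Type} {D : DiGr U}

def parents (D : DiGr U) (a : U) : Set U := {c | D.Adj c a}

def Blocks (D : DiGr U) (C : Set U) (a w b : U) : Prop :=
  ((D.Adj a w ∧ D.Adj b w) ∧ ∀ d, D.Reaches w d → d ∉ C) ∨ (¬(D.Adj a w ∧ D.Adj b w) ∧ w ∈ C)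

def PathBlocked (D : DiGr U) (C : Set U) (p : List U) : Prop :=
  ∃ l₁ a w b l₂, p = l₁ ++ a :: w :: b :: l₂ ∧ D.Blocks C a w b

theorem Blocks.symm {C : Set U} {a w b : U} (h : D.Blocks C a w b) : D.Blocks C b w a := by
  unfold Blocks at *
  tauto

theorem PathBlocked.cons {C : Set U} {p : List U} (h : D.PathBlocked C p) (x : U) :
    D.PathBlocked C (x :: p) := by
  obtain ⟨l₁, a, w, b, l₂, rfl, hb⟩ := h
  exact ⟨x :: l₁, a, w, b, l₂, rfl, hb⟩

theorem PathBlocked.of_reverse {C : Set U} {p : List U} (h : D.PathBlocked C p.reverse) :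
    D.PathBlocked C p := by
  obtain ⟨l₁, a, w, b, l₂, hp, hb⟩ := h
  refine ⟨l₂.reverse, b, w, a, l₁.reverse, ?_, hb.symm⟩
  rw [← List.reverse_reverse p, hp]
  simp

theorem blockedAt_append_length (C : Set U) (l₁ l₂ : List U) (a w b : U) :
    BlockedAt D C (l₁ ++ a :: w :: b :: l₂) l₁.length ↔ D.Blocks C a w b := by
  simp [BlockedAt, ColliderAt, Blocks]

theorem exists_blockedAt_iff_pathBlocked (C : Set U) (p : List U) :
    (∃ i, BlockedAt D C p i) ↔ D.PathBlocked C p := by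
  constructor
  · rintro ⟨i, hblocked⟩
    have hi : i + 2 < p.length := hblocked.choose_spec.2.1
    have hp : p = p.take i ++ p[i] :: p[i + 1] :: p[i + 2] :: p.drop (i + 3) := by
      rw [← List.drop_eq_getElem_cons, ← List.drop_eq_getElem_cons,
        ← List.drop_eq_getElem_cons, List.take_append_drop]
    refine ⟨_, _, _, _, _, hp, ?_⟩
    rwa [← blockedAt_append_length, ← hp, List.length_take_of_le (by omega)]
  · rintro ⟨l₁, a, w, b, l₂, rfl, hb⟩
    exact ⟨l₁.length, (blockedAt_append_length C l₁ l₂ a w b).2 hb⟩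

theorem Acyclic.not_adj_of_reaches (hD : D.Acyclic) {a b : U} (hab : D.Reaches a b) :
    ¬ D.Adj b a :=
  fun hba => hD a (Relation.TransGen.tail' hab hba)

theorem Acyclic.eq_of_reaches_of_reaches (hD : D.Acyclic) {a b : U} (hab : D.Reaches a b)
    (hba : D.Reaches b a) : a = b := by
  rcases Relation.reflTransGen_iff_eq_or_transGen.1 hab with h | h
  · exact h.symm
  · exact absurd (h.trans_left hba) (hD a)

theorem Acyclic.parents_subset_compl (hD : D.Acyclic) {α β : U} (hαβ : ¬ D.UAdj α β) :
    D.parents α ⊆ Set.univ \ {α, β} := by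
  rintro c (hc : D.Adj c α)
  refine ⟨trivial, ?_⟩
  rintro (rfl | rfl)
  · exact hD.not_adj_of_reaches Relation.ReflTransGen.refl hc
  · exact hαβ (Or.inr hc)

theorem isUPath_reverse {p : List U} (hp : IsUPath D p) : IsUPath D p.reverse :=
  ⟨List.isChain_reverse.2 (hp.1.imp fun _ _ h => h.symm), List.nodup_reverse.2 hp.2⟩

theorem _root_.DSep.symm {A B C : Set U} (h : DSep D A C B) : DSep D B C A := by
  intro p hp hB hA
  rw [exists_blockedAt_iff_pathBlocked]
  apply PathBlocked.of_reverse
  rw [← exists_blockedAt_iff_pathBlocked]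
  exact h _ (isUPath_reverse hp) (by simpa [List.head?_reverse] using hA)
    (by simpa [List.getLast?_reverse] using hB)

theorem not_dsep_of_uAdj {α β : U} (hαβ : α ≠ β) (hadj : D.UAdj α β) (C : Set U) :
    ¬ DSep D {α} C {β} := by
  intro hsep
  obtain ⟨i, w, -, hi, -⟩ :=
    hsep [α, β] ⟨List.isChain_pair.2 hadj, by simpa using hαβ⟩ ⟨α, rfl, rfl⟩ ⟨β, rfl, rfl⟩
  simp at hi

theorem Acyclic.pathBlocked_parents_of_adj_of_reaches (hD : D.Acyclic) {α β : U}
    (hαβ : ¬ D.Reaches α β) {u v : U} {rest : List U} (hpath : (v :: rest).IsChain D.UAdj)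
    (huv : D.Adj u v) (hαv : D.Reaches α v) (hlast : (v :: rest).getLast? = some β) :
    D.PathBlocked (D.parents α) (u :: v :: rest) := by
  induction rest generalizing u v with
  | nil =>
    obtain rfl : v = β := by simpa using hlast
    exact absurd hαv hαβ
  | cons w rest ih =>
    rw [List.isChain_cons_cons] at hpath
    rcases hpath.1 with hvw | hwv
    · exact (ih hpath.2 hvw (hαv.tail hvw) (by simpa using hlast)).cons u
    · exact ⟨[], u, v, w, rest, rfl,
        Or.inl ⟨⟨huv, hwv⟩, fun d hvd hdα => hD.not_adj_of_reaches (hαv.trans hvd) hdα⟩⟩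

theorem Acyclic.dsep_parents (hD : D.Acyclic) {α β : U} (hadj : ¬ D.UAdj α β)
    (hαβ : ¬ D.Reaches α β) : DSep D {α} (D.parents α) {β} := by
  rintro p ⟨hpath, -⟩ ⟨a, ha, hhead⟩ ⟨b, hb, hlast⟩
  obtain ⟨rest, rfl⟩ : ∃ rest, p = α :: rest := by
    cases p <;> simp_all
  rw [Set.mem_singleton_iff.1 hb] at hlast
  rw [exists_blockedAt_iff_pathBlocked]
  replace hpath : (α :: rest).IsChain D.UAdj := hpath
  match rest, hpath, hlast with
  | [], _, hlast =>
    obtain rfl : α = β := by simpa using hlast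
    exact absurd Relation.ReflTransGen.refl hαβ
  | [x], hpath, hlast =>
    obtain rfl : x = β := by simpa using hlast
    exact absurd (List.isChain_pair.1 hpath) hadj
  | x :: y :: rest, hpath, hlast =>
    rw [List.isChain_cons_cons] at hpath
    rcases hpath.1 with hαx | hxα
    · exact hD.pathBlocked_parents_of_adj_of_reaches hαβ hpath.2 hαx (.single hαx)
        (by simpa using hlast)
    · exact ⟨[], α, x, y, rest, rfl,
        Or.inr ⟨fun h => hD.not_adj_of_reaches (.single h.1) hxα, hxα⟩⟩

end DiGr

theorem stmt4_general {U : Type} (D : DiGr U) (hD : D.Acyclic)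
    (α β : U) (hαβ : α ≠ β) :
    (D.Adj α β ∨ D.Adj β α) ↔
      ∀ C : Set U, C ⊆ Set.univ \ {α, β} → ¬ DSep D {α} C {β} := by
  refine ⟨fun hadj C _ => DiGr.not_dsep_of_uAdj hαβ hadj C, fun hsep => ?_⟩
  by_contra hadj
  by_cases hreach : D.Reaches α β
  · have hβα : ¬ D.Reaches β α := fun h => hαβ (hD.eq_of_reaches_of_reaches hreach h)
    have hadj' : ¬ D.UAdj β α := fun h => hadj h.symm
    refine hsep _ ?_ (hD.dsep_parents hadj' hβα).symm
    simpa [Set.pair_comm] using hD.parents_subset_compl hadj'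
  · exact hsep _ (hD.parents_subset_compl hadj) (hD.dsep_parents hadj hreach)

/-- In a DAG, two distinct vertices are adjacent (in either direction) iff no
subset of the remaining vertices d-separates them. -/
theorem stmt4 {U : Type} [Fintype U] (D : DiGr U) (hD : D.Acyclic)
    (α β : U) (hαβ : α ≠ β) :
    (D.Adj α β ∨ D.Adj β α) ↔
      ∀ C : Set U, C ⊆ Set.univ \ {α, β} → ¬ DSep D {α} C {β} :=
  stmt4_general D hD α β hαβ
end

section
/- The class of causal models is not axiomatizable: for any set Γ of clauses of independency logic (Horn or disjunctive, finite or countably infinite) such that every causal model satisfies every clause in Γ, there exists an independency model that satisfies every clause in Γ but is not a causal model. -/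
/-- Set terms of independency logic. -/
inductive ITerm
  | var : ℕ → ITerm
  | empty : ITerm
  | compl : ITerm → ITerm
  | union : ITerm → ITerm → ITerm
  | inter : ITerm → ITerm → ITerm

/-- Evaluation of a term under a valuation `v`, over the universe `W`. -/
def ITerm.eval {U : Type} (W : Set U) (v : ℕ → Set U) : ITerm → Set U
  | .var n => v n
  | .empty => ∅
  | .compl t => W \ t.eval W v
  | .union s t => s.eval W v ∪ t.eval W v
  | .inter s t => s.eval W v ∩ t.eval W v

/-- An atom `I(T₁,T₂,T₃)` of independency logic. -/
structure IAtom where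
  t1 : ITerm
  t2 : ITerm
  t3 : ITerm

/-- The valuation `v` is valid for the atom: its arguments evaluate to pairwise
disjoint sets. -/
def IAtom.Valid {U : Type} (W : Set U) (v : ℕ → Set U) (a : IAtom) : Prop :=
  Disjoint (a.t1.eval W v) (a.t2.eval W v) ∧ Disjoint (a.t1.eval W v) (a.t3.eval W v) ∧
    Disjoint (a.t2.eval W v) (a.t3.eval W v)

/-- The atom holds in `M` under `v`. -/
def IAtom.Holds {U : Type} (W : Set U) (M : Set U → Set U → Set U → Prop)
    (v : ℕ → Set U) (a : IAtom) : Prop :=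
  M (a.t1.eval W v) (a.t2.eval W v) (a.t3.eval W v)

/-- A clause: a disjunction of literals, each a sign (`true` = positive)
together with an atom. -/
abbrev IClause := List (Bool × IAtom)

/-- `M` (a model on universe `W`) satisfies the clause `c`: every valuation
into subsets of `W` that is valid for all atoms of `c` makes some literal of
`c` true. -/
def SatC {U : Type} (W : Set U) (M : Set U → Set U → Set U → Prop)
    (c : IClause) : Prop :=
  ∀ v : ℕ → Set U, (∀ n, v n ⊆ W) → (∀ l ∈ c, l.2.Valid W v) →
    ∃ l ∈ c, (l.1 = true ∧ l.2.Holds W M v) ∨ (l.1 = false ∧ ¬ l.2.Holds W M v)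

/-- `M` is an independency model: only pairwise disjoint triples belong to it. -/
def IsIndep {U : Type} (M : Set U → Set U → Set U → Prop) : Prop :=
  ∀ A C B : Set U, M A C B → Disjoint A B ∧ Disjoint A C ∧ Disjoint B C

/-- `M` is a causal model: it is the d-separation relation of some DAG. -/
def IsCausalModel {n : ℕ} (M : Set (Fin n) → Set (Fin n) → Set (Fin n) → Prop) : Prop :=
  ∃ D : DiGr (Fin n), D.Acyclic ∧ ∀ A C B : Set (Fin n), M A C B ↔ InCausal D A C B

/-! Pulling a model back along a surjection preserves being an independency model and, since
term evaluation commutes with preimages, the satisfaction of every clause. Collapsing the two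
sinks of the DAG `0 → 2, 1 → 3` into one vertex gives a model on three variables with
`I(0,∅,1)` and `I(0,2,1)` but neither `I(0,∅,2)` nor `I(1,∅,2)`. In a graph realizing it,
`0` and `1` are not adjacent, so both are adjacent to `2`; the path `0 - 2 - 1` is then blocked
by `∅` only if `2` is a collider on it, and by `{2}` only if it is not. -/

open Set

section Comap
variable {α β : Type}

def comapModel (f : α → β) (M : Set α → Set α → Set α → Prop) :
    Set β → Set β → Set β → Prop :=
  fun A C B => M (f ⁻¹' A) (f ⁻¹' C) (f ⁻¹' B)

theorem ITerm.eval_univ_preimage (f : α → β) (v : ℕ → Set β) (t : ITerm) :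
    t.eval univ (fun n => f ⁻¹' v n) = f ⁻¹' t.eval univ v := by
  induction t with
  | var n => rfl
  | empty => rfl
  | compl t ih => simp only [ITerm.eval, ih, preimage_sdiff, preimage_univ]
  | union s t ihs iht => simp only [ITerm.eval, ihs, iht, preimage_union]
  | inter s t ihs iht => simp only [ITerm.eval, ihs, iht, preimage_inter]

theorem IAtom.Valid.preimage {v : ℕ → Set β} {a : IAtom} (h : a.Valid univ v) (f : α → β) :
    a.Valid univ (fun n => f ⁻¹' v n) := by
  obtain ⟨h₁₂, h₁₃, h₂₃⟩ := h
  simp only [IAtom.Valid, ITerm.eval_univ_preimage]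
  exact ⟨h₁₂.preimage f, h₁₃.preimage f, h₂₃.preimage f⟩

theorem IAtom.holds_comapModel (f : α → β) (M : Set α → Set α → Set α → Prop)
    (v : ℕ → Set β) (a : IAtom) :
    a.Holds univ (comapModel f M) v ↔ a.Holds univ M (fun n => f ⁻¹' v n) := by
  simp only [IAtom.Holds, comapModel, ITerm.eval_univ_preimage]

theorem SatC.comap {M : Set α → Set α → Set α → Prop} {c : IClause} (h : SatC univ M c)
    (f : α → β) : SatC univ (comapModel f M) c := by
  intro v _ hv
  obtain ⟨l, hl, hlit⟩ := h _ (fun _ => subset_univ _) (fun l hl => (hv l hl).preimage f)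
  exact ⟨l, hl, by simpa only [IAtom.holds_comapModel] using hlit⟩

theorem IsIndep.comap {M : Set α → Set α → Set α → Prop} (hM : IsIndep M) {f : α → β}
    (hf : Function.Surjective f) : IsIndep (comapModel f M) := by
  intro A C B h
  simpa only [disjoint_preimage_iff hf] using hM _ _ _ h

end Comap

section DSeparation
variable {U : Type} {D : DiGr U} {A B C : Set U}

theorem isIndep_inCausal (D : DiGr U) : IsIndep (InCausal D) :=
  fun _ _ _ h => ⟨h.1, h.2.1, h.2.2.1⟩

theorem inCausal_empty_iff (h : Disjoint A B) : InCausal D A ∅ B ↔ DSep D A ∅ B := by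
  simp [InCausal, h]

theorem colliderAt_of_blockedAt_empty {p : List U} {i : ℕ} (h : BlockedAt D ∅ p i) :
    ColliderAt D p i := by
  obtain ⟨w, -, -, ⟨hcol, -⟩ | ⟨-, hw⟩⟩ := h
  · exact hcol
  · exact absurd hw (notMem_empty w)

theorem not_colliderAt_of_blockedAt {p : List U} {i : ℕ} {w : U} (h : BlockedAt D C p i)
    (hw : p[i + 1]? = some w) (hwC : w ∈ C) : ¬ ColliderAt D p i := by
  obtain ⟨w', hw', -, ⟨-, hdesc⟩ | ⟨hcol, -⟩⟩ := h
  · cases hw.symm.trans hw'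
    exact fun _ => hdesc w Relation.ReflTransGen.refl hwC
  · exact hcol

theorem DSep.not_uAdj (h : DSep D A C B) {a b : U} (ha : a ∈ A) (hb : b ∈ B) (hab : a ≠ b) :
    ¬ D.UAdj a b := by
  intro hadj
  obtain ⟨i, -, -, hi, -⟩ :=
    h [a, b] ⟨List.isChain_pair.2 hadj, by simpa using hab⟩ ⟨a, ha, rfl⟩ ⟨b, hb, rfl⟩
  simp at hi

theorem not_inCausal_of_uAdj {a b : U} (ha : a ∈ A) (hb : b ∈ B) (hab : a ≠ b)
    (hadj : D.UAdj a b) : ¬ InCausal D A C B :=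
  fun h => h.2.2.2.not_uAdj ha hb hab hadj

theorem DSep.blockedAt_zero {a w b : U} (h : DSep D A C B) (ha : a ∈ A) (hb : b ∈ B)
    (hpath : IsUPath D [a, w, b]) : BlockedAt D C [a, w, b] 0 := by
  obtain ⟨i, hi⟩ := h _ hpath ⟨a, ha, rfl⟩ ⟨b, hb, rfl⟩
  obtain rfl : i = 0 := by
    obtain ⟨-, -, hlt, -⟩ := hi
    simp only [List.length_cons, List.length_nil] at hlt
    omega
  exact hi

theorem exists_uAdj_of_not_dSep (hAB : Disjoint A B) (h : ¬ DSep D A C B) :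
    ∃ a ∈ A, ∃ y, y ≠ a ∧ D.UAdj a y := by
  simp only [DSep, not_forall] at h
  obtain ⟨p, ⟨hchain, hnodup⟩, ⟨a, ha, hhead⟩, ⟨b, hb, hlast⟩, -⟩ := h
  rcases p with _ | ⟨x, _ | ⟨y, l⟩⟩
  · simp at hhead
  · simp only [List.head?_cons, Option.some.injEq, List.getLast?_singleton] at hhead hlast
    exact absurd (hhead.symm.trans hlast) (hAB.ne_of_mem ha hb)
  · simp only [List.head?_cons, Option.some.injEq] at hhead
    subst hhead
    exact ⟨x, ha, y, fun hyx => (List.nodup_cons.1 hnodup).1 (hyx ▸ List.mem_cons_self),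
      (List.isChain_cons_cons.1 hchain).1⟩

theorem dSep_of_uAdj_closed (S : Set U) (hS : ∀ x y, D.UAdj x y → x ∈ S → y ∈ S)
    (hA : A ⊆ S) (hB : Disjoint S B) : DSep D A C B := by
  rintro p ⟨hchain, -⟩ ⟨a, ha, hhead⟩ ⟨b, hb, hlast⟩
  have hpS : ∀ x ∈ p, x ∈ S := hchain.induction (· ∈ S) p (fun x y hxy hx => hS x y hxy hx)
    fun hne => by
      rw [List.head?_eq_some_head hne, Option.some.injEq] at hhead
      exact hhead ▸ hA ha
  exact (hB.ne_of_mem (hpS b (List.mem_of_getLast? hlast)) hb rfl).elim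

end DSeparation

theorem not_isCausalModel_fin_three {M : Set (Fin 3) → Set (Fin 3) → Set (Fin 3) → Prop}
    (h01 : M {0} ∅ {1}) (h01_2 : M {0} {2} {1}) (h02 : ¬ M {0} ∅ {2}) (h12 : ¬ M {1} ∅ {2}) :
    ¬ IsCausalModel M := by
  rintro ⟨D, -, hD⟩
  have hsep : DSep D {0} ∅ {1} := ((hD _ _ _).1 h01).2.2.2
  have hsep₂ : DSep D {0} {2} {1} := ((hD _ _ _).1 h01_2).2.2.2
  have hnadj : ¬ D.UAdj 0 1 := hsep.not_uAdj rfl rfl (by decide)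
  have uAdj_two (x : Fin 3) (hx : x ≠ 2) (hM : ¬ M {x} ∅ {2}) : D.UAdj x 2 := by
    have hdisj : Disjoint ({x} : Set (Fin 3)) {2} := disjoint_singleton.2 hx
    rw [hD, inCausal_empty_iff hdisj] at hM
    obtain ⟨a, rfl, y, hya, hy⟩ := exists_uAdj_of_not_dSep hdisj hM
    fin_cases a <;> fin_cases y <;> simp_all [DiGr.UAdj]
  have hpath : IsUPath D [0, 2, 1] :=
    ⟨List.isChain_cons_cons.2 ⟨uAdj_two 0 (by decide) h02,
      List.isChain_pair.2 (uAdj_two 1 (by decide) h12).symm⟩, by decide⟩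
  exact not_colliderAt_of_blockedAt (hsep₂.blockedAt_zero rfl rfl hpath) rfl rfl
    (colliderAt_of_blockedAt_empty (hsep.blockedAt_zero rfl rfl hpath))

def collapse : Fin 4 → Fin 3 := ![0, 1, 2, 2]

def twoArrows : DiGr (Fin 4) := ⟨fun a b => (a = 0 ∧ b = 2) ∨ (a = 1 ∧ b = 3)⟩

theorem collapse_surjective : Function.Surjective collapse := by decide

theorem twoArrows_acyclic : twoArrows.Acyclic := by
  intro a h
  obtain ⟨b, hab, -⟩ := Relation.TransGen.head'_iff.1 h
  obtain ⟨c, -, hca⟩ := Relation.TransGen.tail'_iff.1 h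
  simp only [twoArrows] at hab hca
  omega

theorem comapModel_twoArrows_zero_one {C : Set (Fin 3)} (hC : C ⊆ {2}) :
    comapModel collapse (InCausal twoArrows) {0} C {1} := by
  have h0 : Disjoint ({0} : Set (Fin 3)) C :=
    disjoint_singleton_left.2 fun h => by simpa using hC h
  have h1 : Disjoint ({1} : Set (Fin 3)) C :=
    disjoint_singleton_left.2 fun h => by simpa using hC h
  refine ⟨(disjoint_singleton.2 (by decide)).preimage _, h0.preimage _, h1.preimage _,
    dSep_of_uAdj_closed {0, 2} ?_ ?_ ?_⟩
  · intro x y hxy hx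
    simp only [DiGr.UAdj, twoArrows, mem_insert_iff, mem_singleton_iff] at hxy hx ⊢
    omega
  · intro x hx
    fin_cases x <;> simp_all [collapse]
  · rw [disjoint_left]
    intro x hx
    fin_cases x <;> simp_all [collapse]

theorem not_comapModel_twoArrows {x : Fin 3} {a b : Fin 4} (ha : collapse a = x)
    (hb : collapse b = 2) (hab : twoArrows.Adj a b) :
    ¬ comapModel collapse (InCausal twoArrows) {x} ∅ {2} :=
  not_inCausal_of_uAdj ha hb (by rintro rfl; simp only [twoArrows] at hab; omega)
    (Or.inl hab)

/-- Causal models are not axiomatizable by clauses: for any set `Γ` of clauses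
satisfied by every causal model, some independency model satisfies all of `Γ`
yet is not causal. -/
theorem stmt9 (Γ : Set IClause)
    (h : ∀ (n : ℕ) (D : DiGr (Fin n)), D.Acyclic →
      ∀ c ∈ Γ, SatC Set.univ (InCausal D) c) :
    ∃ (n : ℕ) (M : Set (Fin n) → Set (Fin n) → Set (Fin n) → Prop),
      IsIndep M ∧ (∀ c ∈ Γ, SatC Set.univ M c) ∧ ¬ IsCausalModel M :=
  ⟨3, comapModel collapse (InCausal twoArrows), (isIndep_inCausal _).comap collapse_surjective,
    fun c hc => (h 4 twoArrows twoArrows_acyclic c hc).comap collapse,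
    not_isCausalModel_fin_three (comapModel_twoArrows_zero_one (empty_subset _))
      (comapModel_twoArrows_zero_one subset_rfl)
      (not_comapModel_twoArrows (a := 0) (b := 2) rfl rfl (Or.inl ⟨rfl, rfl⟩))
      (not_comapModel_twoArrows (a := 1) (b := 3) rfl rfl (Or.inr ⟨rfl, rfl⟩))⟩
end

section
/- Every graph-isomorph satisfies intersection: if (A, C ∪ B', B) ∈ M and (A, C ∪ B, B') ∈ M (with all relevant sets pairwise disjoint), then (A, C, B ∪ B') ∈ M. -/
/-!
Suppose a walk from `A` to `B ∪ B'` avoids `C`, say it ends in `B`. Since `C ∪ B'` separates `A`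
from `B`, the walk passes through `B'` before its end, and its initial segment up to that point
is a strictly shorter walk from `A` to `B'` avoiding `C`. Symmetrically, a walk to `B'` yields a
shorter one to `B`, so there is no shortest such walk, hence none at all.
-/

namespace Separates

variable {V : Type} {G : SimpleGraph V} {A B B' C : Set V}

theorem exists_shorter_walk_avoiding (h : Separates G A (C ∪ B') B) (hBB' : Disjoint B B')
    {a b : V} (ha : a ∈ A) (hb : b ∈ B) (p : G.Walk a b) (hp : ∀ w ∈ p.support, w ∉ C) :
    ∃ b' ∈ B', ∃ q : G.Walk a b', q.length < p.length ∧ ∀ w ∈ q.support, w ∉ C := by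
  classical
  obtain ⟨w, hw, hwCB'⟩ := h a ha b hb p
  have hwB' : w ∈ B' := hwCB'.resolve_left (hp w hw)
  refine ⟨w, hwB', p.takeUntil w hw,
    SimpleGraph.Walk.length_takeUntil_lt_length hw (hBB'.ne_of_mem hb hwB').symm,
    fun x hx => hp x (p.support_takeUntil_subset_support hw hx)⟩

theorem intersection (h₁ : Separates G A (C ∪ B') B) (h₂ : Separates G A (C ∪ B) B')
    (hBB' : Disjoint B B') : Separates G A C (B ∪ B') := by
  intro a ha b hb p
  by_contra! hp
  induction hn : p.length using Nat.strong_induction_on generalizing b with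
  | _ n ih =>
    rcases hb with hb | hb
    · obtain ⟨b', hb', q, hlt, hq⟩ := h₁.exists_shorter_walk_avoiding hBB' ha hb p hp
      exact ih q.length (hn ▸ hlt) b' (Or.inr hb') q hq rfl
    · obtain ⟨b', hb', q, hlt, hq⟩ := h₂.exists_shorter_walk_avoiding hBB'.symm ha hb p hp
      exact ih q.length (hn ▸ hlt) b' (Or.inl hb') q hq rfl

end Separates

theorem stmt14_general {U : Type} (M : Set U → Set U → Set U → Prop)
    (h : IsGraphIsomorphOn Set.univ M) (A C B B' : Set U)
    (h1 : M A (C ∪ B') B) (h2 : M A (C ∪ B) B') : M A C (B ∪ B') := by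
  obtain ⟨G, hG⟩ := h
  rw [hG] at h1 h2 ⊢
  obtain ⟨-, -, -, hAB, hACB', hBCB', hs₁⟩ := h1
  obtain ⟨-, -, -, hAB', -, hB'CB, hs₂⟩ := h2
  rw [Set.preimage_union] at hs₁ hs₂ ⊢
  refine ⟨Set.subset_univ _, Set.subset_univ _, Set.subset_univ _,
    Set.disjoint_union_right.mpr ⟨hAB, hAB'⟩, hACB'.mono_right Set.subset_union_left,
    Set.disjoint_union_left.mpr ⟨hBCB'.mono_right Set.subset_union_left,
      hB'CB.mono_right Set.subset_union_left⟩, ?_⟩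
  exact hs₁.intersection hs₂ ((hBCB'.mono_right Set.subset_union_right).preimage _)

/-- Every graph-isomorph satisfies intersection. -/
theorem stmt14 {U : Type} [Fintype U] (M : Set U → Set U → Set U → Prop)
    (h : IsGraphIsomorphOn Set.univ M) (A C B B' : Set U)
    (hAC : Disjoint A C) (hAB : Disjoint A B) (hAB' : Disjoint A B')
    (hCB : Disjoint C B) (hCB' : Disjoint C B') (hBB' : Disjoint B B')
    (h1 : M A (C ∪ B') B) (h2 : M A (C ∪ B) B') : M A C (B ∪ B') :=
  stmt14_general M h A C B B' h1 h2
end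

section
/- The class of graph-isomorphs on finite sets is closed under sub-models, but the class of causal models on finite sets is not closed under sub-models. -/
/-- `M` is a causal model on the carrier `W ⊆ U`. -/
def IsCausalOn {U : Type} (W : Set U) (M : Set U → Set U → Set U → Prop) : Prop :=
  ∃ D : DiGr W, D.Acyclic ∧ ∀ A C B : Set U,
    M A C B ↔ A ⊆ W ∧ C ⊆ W ∧ B ⊆ W ∧ Disjoint A B ∧ Disjoint A C ∧ Disjoint B C ∧
      DSep D (Subtype.val ⁻¹' A) (Subtype.val ⁻¹' C) (Subtype.val ⁻¹' B)

/-!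
For graph-isomorphs, the sub-model on `V` is the separation relation of the marginal graph on `V`,
in which two vertices of `V` are adjacent when a path of the original graph joins them through
vertices outside `V`: walks of either graph translate into walks of the other passing through the
same vertices of `V`.

For causal models, marginalising the hidden common cause `h` of `a → c ← h → d ← b` leaves the
independencies `a ⊥ b`, `a ⊥ d`, `b ⊥ c` and the dependencies `a – c`, `b – d`, `c – d`. A DAG on
`{a, b, c, d}` with these must have the skeleton `a – c – d – b`, and then the marginal
independence of `a` and `d`, and of `b` and `c`, forces the colliders `a → c ← d` and
`b → d ← c`, i.e. a cycle.
-/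

open Set

section Marginal

variable {U : Type} {W V : Set U} (G : SimpleGraph W) (hVW : V ⊆ W)

def marginalGraph : SimpleGraph V where
  Adj u v := u ≠ v ∧ ∃ r : G.Walk (inclusion hVW u) (inclusion hVW v),
    ∀ x ∈ r.support, x.1 ∈ V → x.1 = u ∨ x.1 = v
  symm := ⟨fun _ _ ⟨hne, r, hr⟩ =>
    ⟨hne.symm, r.reverse, fun x hx hxV =>
      (hr x (List.mem_reverse.mp (r.support_reverse ▸ hx)) hxV).symm⟩⟩
  loopless := ⟨fun _ h => h.1 rfl⟩

variable {G hVW}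

lemma exists_walk_of_marginalGraph_walk {u v : V} (p : (marginalGraph G hVW).Walk u v) :
    ∃ q : G.Walk (inclusion hVW u) (inclusion hVW v),
      ∀ x ∈ q.support, x.1 ∈ V → ∃ y ∈ p.support, (y : U) = x := by
  induction p with
  | nil =>
    refine ⟨.nil, fun x hx _ => ⟨_, SimpleGraph.Walk.start_mem_support _, ?_⟩⟩
    simp_all
  | @cons u w v huw p ih =>
    obtain ⟨r, hr⟩ := huw.2
    obtain ⟨q, hq⟩ := ih
    refine ⟨r.append q, fun x hx hxV => ?_⟩
    rcases (SimpleGraph.Walk.mem_support_append_iff _ _).mp hx with hx | hx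
    · rcases hr x hx hxV with h | h
      · exact ⟨u, by simp, h.symm⟩
      · exact ⟨w, by simp, h.symm⟩
    · obtain ⟨y, hy, hyx⟩ := hq x hx hxV
      exact ⟨y, by simp [hy], hyx⟩

lemma exists_marginalGraph_walk_of_walk {x b : W} (p : G.Walk x b) (hb : b.1 ∈ V) :
    ∃ (v : V) (r : G.Walk x (inclusion hVW v)), (∀ y ∈ r.support, y.1 ∈ V → y.1 = v) ∧
      ∃ q : (marginalGraph G hVW).Walk v ⟨b, hb⟩, ∀ y ∈ q.support, inclusion hVW y ∈ p.support := by
  induction p with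
  | nil => exact ⟨⟨_, hb⟩, .nil, fun y hy _ => by simp_all, .nil, fun y hy => by simp_all⟩
  | @cons x w b hxw p ih =>
    obtain ⟨v, r, hr, q, hq⟩ := ih hb
    by_cases hx : x.1 ∈ V
    · refine ⟨⟨x, hx⟩, .nil, fun y hy _ => by simp_all, ?_⟩
      by_cases hxv : (⟨x, hx⟩ : V) = v
      · subst hxv
        exact ⟨q, fun y hy => by simp [hq y hy]⟩
      have hadj : (marginalGraph G hVW).Adj ⟨x, hx⟩ v := by
        refine ⟨hxv, .cons hxw r, fun y hy hyV => ?_⟩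
        rcases List.mem_cons.mp (SimpleGraph.Walk.support_cons hxw r ▸ hy) with rfl | hy
        · exact Or.inl rfl
        · exact Or.inr (hr y hy hyV)
      refine ⟨.cons hadj q, fun y hy => ?_⟩
      rcases List.mem_cons.mp (SimpleGraph.Walk.support_cons hadj q ▸ hy) with rfl | hy
      · simp
      · simp [hq y hy]
    · refine ⟨v, .cons hxw r, fun y hy hyV => ?_, q, fun y hy => by simp [hq y hy]⟩
      rcases List.mem_cons.mp (SimpleGraph.Walk.support_cons hxw r ▸ hy) with rfl | hy
      · exact absurd hyV hx
      · exact hr y hy hyV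

lemma separates_marginalGraph_iff {A C B : Set U} (hA : A ⊆ V) (hB : B ⊆ V) (hC : C ⊆ V) :
    Separates (marginalGraph G hVW) (Subtype.val ⁻¹' A) (Subtype.val ⁻¹' C) (Subtype.val ⁻¹' B) ↔
      Separates G (Subtype.val ⁻¹' A) (Subtype.val ⁻¹' C) (Subtype.val ⁻¹' B) := by
  constructor
  · intro hsep a ha b hb p
    obtain ⟨v, r, hr, q, hq⟩ := exists_marginalGraph_walk_of_walk (hVW := hVW) p (hB hb)
    obtain rfl : v = ⟨a, hA ha⟩ := Subtype.ext (hr a r.start_mem_support (hA ha)).symm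
    obtain ⟨w, hw, hwC⟩ := hsep _ ha _ hb q
    exact ⟨_, hq w hw, hwC⟩
  · intro hsep a ha b hb p
    obtain ⟨q, hq⟩ := exists_walk_of_marginalGraph_walk p
    obtain ⟨x, hx, hxC⟩ := hsep (inclusion hVW a) ha (inclusion hVW b) hb q
    obtain ⟨y, hy, hyx⟩ := hq x hx (hC hxC)
    exact ⟨y, hy, show (y : U) ∈ C from hyx ▸ hxC⟩

end Marginal

theorem IsGraphIsomorphOn.restrict {U : Type} {W V : Set U} {M : Set U → Set U → Set U → Prop}
    (hM : IsGraphIsomorphOn W M) (hVW : V ⊆ W) : IsGraphIsomorphOn V (Restrict M V) := by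
  obtain ⟨G, hG⟩ := hM
  refine ⟨marginalGraph G hVW, fun A C B => ?_⟩
  rw [Restrict, hG]
  constructor
  · rintro ⟨⟨-, -, -, hAB, hAC, hBC, hsep⟩, hA, hC, hB⟩
    exact ⟨hA, hC, hB, hAB, hAC, hBC, (separates_marginalGraph_iff hA hB hC).mpr hsep⟩
  · rintro ⟨hA, hC, hB, hAB, hAC, hBC, hsep⟩
    exact ⟨⟨hA.trans hVW, hC.trans hVW, hB.trans hVW, hAB, hAC, hBC,
      (separates_marginalGraph_iff hA hB hC).mp hsep⟩, hA, hC, hB⟩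

lemma DiGr.acyclic_of_lt {U α : Type} [Preorder α] {D : DiGr U} (f : U → α)
    (hf : ∀ x y, D.Adj x y → f x < f y) : D.Acyclic := fun a ha => by
  have := ha.lift f hf
  rw [Relation.transGen_eq_self] at this
  exact lt_irrefl _ this

namespace DSep

variable {U : Type} {D : DiGr U} {A C B : Set U}

lemma not_uAdj_s18 (h : DSep D A C B) {x y : U} (hx : x ∈ A) (hy : y ∈ B) (hxy : x ≠ y) :
    ¬ D.UAdj x y := fun hadj => by
  obtain ⟨i, -, -, hlen, -⟩ :=
    h [x, y] ⟨List.isChain_pair.mpr hadj, by simp [hxy]⟩ ⟨x, hx, rfl⟩ ⟨y, hy, rfl⟩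
  simp at hlen

lemma collider_of_uAdj_uAdj (h : DSep D A C B) {x m y : U} (hx : x ∈ A) (hy : y ∈ B)
    (hm : m ∉ C) (hxm : D.UAdj x m) (hmy : D.UAdj m y) (hxm' : x ≠ m) (hxy : x ≠ y)
    (hmy' : m ≠ y) : D.Adj x m ∧ D.Adj y m := by
  obtain ⟨i, w, hw, hlen, hblock⟩ := h [x, m, y]
    ⟨List.isChain_cons_cons.mpr ⟨hxm, List.isChain_pair.mpr hmy⟩, by simp [hxm', hxy, hmy']⟩
    ⟨x, hx, rfl⟩ ⟨y, hy, rfl⟩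
  obtain rfl : i = 0 := by simp at hlen; omega
  obtain rfl : w = m := by simpa using hw.symm
  rcases hblock with ⟨⟨x', m', y', hx', hm', hy', hx'm', hy'm'⟩, -⟩ | ⟨-, hmC⟩
  · simp only [List.getElem?_cons_zero, List.getElem?_cons_succ, Option.some.injEq] at hx' hm' hy'
    subst hx' hm' hy'
    exact ⟨hx'm', hy'm'⟩
  · exact absurd hmC hm

lemma of_uAdj_closed {S : Set U} (hS : ∀ x y, D.UAdj x y → x ∈ S → y ∈ S) (hA : A ⊆ S)
    (hB : Disjoint B S) : DSep D A C B := by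
  rintro p ⟨hp, -⟩ ⟨a, ha, hpa⟩ ⟨b, hb, hpb⟩
  have hpS := hp.induction (· ∈ S) p (fun x y hxy hx => hS x y hxy hx) fun hne => by
    rw [List.head?_eq_some_head hne, Option.some.injEq] at hpa
    exact hpa ▸ hA ha
  exact absurd (hpS b (List.mem_of_getLast? hpb)) (disjoint_left.mp hB hb)

-- A sink next to the start of a path is a collider without proper descendants.
lemma of_forall_uAdj_sink
    (hA : ∀ a ∈ A, a ∉ B ∧ ∀ w, D.UAdj a w → w ∉ B ∧ w ∉ C ∧ ∀ y, ¬ D.Adj w y) :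
    DSep D A C B := by
  rintro (_ | ⟨a, _ | ⟨w, _ | ⟨u, p⟩⟩⟩) ⟨hp, -⟩ ⟨a', ha', hpa⟩ ⟨b, hb, hpb⟩
  · simp at hpa
  · simp_all
  · simp only [List.head?_cons, List.getLast?_cons_cons, List.getLast?_singleton,
      Option.some.injEq] at hpa hpb
    subst hpa hpb
    exact absurd hb ((hA _ ha').2 _ (List.isChain_pair.mp hp)).1
  · simp only [List.head?_cons, Option.some.injEq] at hpa
    subst hpa
    rw [List.Chain', List.isChain_cons_cons, List.isChain_cons_cons] at hp
    obtain ⟨-, hwC, hw⟩ := (hA _ ha').2 w hp.1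
    have haw : D.Adj a w := hp.1.resolve_right (hw a)
    have huw : D.Adj u w := hp.2.1.resolve_left (hw u)
    refine ⟨0, w, rfl, by simp, .inl ⟨⟨a, w, u, rfl, rfl, rfl, haw, huw⟩, fun d hwd => ?_⟩⟩
    obtain rfl : d = w := by
      rcases hwd.cases_head with h | ⟨c, hwc, -⟩
      · exact h.symm
      · exact absurd hwc (hw c)
    exact hwC

end DSep

lemma DiGr.not_acyclic_of_dsep {U : Type} {D : DiGr U} {a b c d : U}
    (hcover : ∀ x, x = a ∨ x = b ∨ x = c ∨ x = d) (hnodup : [a, b, c, d].Nodup)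
    (hab : DSep D {a} ∅ {b}) (had : DSep D {a} ∅ {d}) (hbc : DSep D {b} ∅ {c})
    (hac : ¬ DSep D {a} ∅ {c}) (hbd : ¬ DSep D {b} ∅ {d}) (hcd : ¬ DSep D {c} ∅ {d}) :
    ¬ D.Acyclic := by
  simp only [List.nodup_cons, List.mem_cons, List.not_mem_nil, List.nodup_nil, not_or] at hnodup
  obtain ⟨⟨hab', hac', had', -⟩, ⟨hbc', hbd', -⟩, ⟨hcd', -⟩, -⟩ := hnodup
  have nab := hab.not_uAdj_s18 rfl rfl hab'
  have nad := had.not_uAdj_s18 rfl rfl had'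
  have nbc := hbc.not_uAdj_s18 rfl rfl hbc'
  have uac : D.UAdj a c := by
    by_contra h
    refine hac (DSep.of_uAdj_closed (S := {a}) ?_ subset_rfl (by simpa using Ne.symm hac'))
    rintro x y hxy rfl
    rcases hcover y with rfl | rfl | rfl | rfl <;> simp_all
  have ubd : D.UAdj b d := by
    by_contra h
    refine hbd (DSep.of_uAdj_closed (S := {b}) ?_ subset_rfl (by simpa using Ne.symm hbd'))
    rintro x y hxy rfl
    rcases hcover y with rfl | rfl | rfl | rfl <;> simp_all [DiGr.UAdj]
  have ucd : D.UAdj c d := by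
    by_contra h
    refine hcd (DSep.of_uAdj_closed (S := {a, c}) ?_ (by simp)
      (by simp [Ne.symm had', Ne.symm hcd']))
    rintro x y hxy (rfl | rfl)
    · rcases hcover y with rfl | rfl | rfl | rfl <;> simp_all
    · rcases hcover y with rfl | rfl | rfl | rfl <;> simp_all [DiGr.UAdj]
  obtain ⟨-, hdc⟩ := had.collider_of_uAdj_uAdj rfl rfl (notMem_empty c) uac ucd hac' had' hcd'
  obtain ⟨-, hcd⟩ := hbc.collider_of_uAdj_uAdj rfl rfl (notMem_empty d) ubd ucd.symm hbd' hbc'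
    (Ne.symm hcd')
  exact fun hD => hD c (.tail (.single hcd) hdc)

def causalModelOn {U : Type} {W : Set U} (D : DiGr W) (A C B : Set U) : Prop :=
  A ⊆ W ∧ C ⊆ W ∧ B ⊆ W ∧ Disjoint A B ∧ Disjoint A C ∧ Disjoint B C ∧
    DSep D (Subtype.val ⁻¹' A) (Subtype.val ⁻¹' C) (Subtype.val ⁻¹' B)

lemma isCausalOn_causalModelOn {U : Type} {W : Set U} {D : DiGr W} (hD : D.Acyclic) :
    IsCausalOn W (causalModelOn D) :=
  ⟨D, hD, fun _ _ _ => Iff.rfl⟩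

lemma dsep_iff_of_restrict_causalModelOn {U : Type} {W V A C B : Set U} {D : DiGr W}
    {D' : DiGr V} (hVW : V ⊆ W)
    (hD' : ∀ A C B, Restrict (causalModelOn D) V A C B ↔ causalModelOn D' A C B)
    (hA : A ⊆ V) (hC : C ⊆ V) (hB : B ⊆ V) (hAB : Disjoint A B) (hAC : Disjoint A C)
    (hBC : Disjoint B C) :
    DSep D (Subtype.val ⁻¹' A) (Subtype.val ⁻¹' C) (Subtype.val ⁻¹' B) ↔
      DSep D' (Subtype.val ⁻¹' A) (Subtype.val ⁻¹' C) (Subtype.val ⁻¹' B) := by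
  simpa [Restrict, causalModelOn, hA, hC, hB, hAB, hAC, hBC, hA.trans hVW, hC.trans hVW,
    hB.trans hVW] using hD' A C B

-- `a → c ← h → d ← b` with `(a, b, h, c, d) = (0, 1, 2, 3, 4)`, so that every edge increases.
def zigzagDAG : DiGr (univ : Set (Fin 5)) :=
  ⟨fun x y => (x.1, y.1) ∈ ({(0, 3), (2, 3), (2, 4), (1, 4)} : Finset (Fin 5 × Fin 5))⟩

instance : DecidableRel zigzagDAG.Adj := fun _ _ => by unfold zigzagDAG; infer_instance

lemma zigzagDAG_acyclic : zigzagDAG.Acyclic :=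
  DiGr.acyclic_of_lt Subtype.val (by decide)

lemma zigzagDAG_dsep {i j : Fin 5} (h : (i, j) = (0, 1) ∨ (i, j) = (0, 4) ∨ (i, j) = (1, 3)) :
    DSep zigzagDAG (Subtype.val ⁻¹' {i}) (Subtype.val ⁻¹' ∅) (Subtype.val ⁻¹' {j}) := by
  refine DSep.of_forall_uAdj_sink ?_
  simp only [DiGr.UAdj, mem_preimage, mem_singleton_iff, mem_empty_iff_false]
  revert i j
  decide

lemma zigzagDAG_not_dsep {i j : Fin 5} (h : (i, j) = (0, 3) ∨ (i, j) = (1, 4) ∨ (i, j) = (3, 4)) :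
    ¬ DSep zigzagDAG (Subtype.val ⁻¹' {i}) (Subtype.val ⁻¹' ∅) (Subtype.val ⁻¹' {j}) := by
  intro hsep
  rcases h with h | h | h <;> obtain ⟨rfl, rfl⟩ := Prod.mk.inj h
  · exact hsep.not_uAdj_s18 (x := ⟨0, trivial⟩) (y := ⟨3, trivial⟩) rfl rfl (by decide)
      (.inl (by decide))
  · exact hsep.not_uAdj_s18 (x := ⟨1, trivial⟩) (y := ⟨4, trivial⟩) rfl rfl (by decide)
      (.inl (by decide))
  · have := hsep.collider_of_uAdj_uAdj (x := ⟨3, trivial⟩) (m := ⟨2, trivial⟩) (y := ⟨4, trivial⟩)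
      rfl rfl (notMem_empty _) (.inr (by decide)) (.inl (by decide)) (by decide) (by decide)
      (by decide)
    exact absurd this.1 (by decide)

theorem not_forall_isCausalOn_restrict :
    ¬ ∀ (n : ℕ) (M : Set (Fin n) → Set (Fin n) → Set (Fin n) → Prop) (V : Set (Fin n)),
        IsCausalOn Set.univ M → IsCausalOn V (Restrict M V) := by
  intro h
  obtain ⟨D', hD', hM⟩ := h 5 _ {2}ᶜ (isCausalOn_causalModelOn zigzagDAG_acyclic)
  have hval (i : Fin 5) (hi : i ≠ 2) :
      Subtype.val ⁻¹' {i} = ({⟨i, hi⟩} : Set ({2}ᶜ : Set (Fin 5))) := by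
    ext; simp [Subtype.ext_iff]
  have transfer (i j : Fin 5) (hi : i ≠ 2) (hj : j ≠ 2) (hij : i ≠ j) :
      DSep zigzagDAG (Subtype.val ⁻¹' {i}) (Subtype.val ⁻¹' ∅) (Subtype.val ⁻¹' {j}) ↔
        DSep D' {⟨i, hi⟩} ∅ {⟨j, hj⟩} := by
    rw [← hval i hi, ← hval j hj, ← preimage_empty (f := Subtype.val)]
    exact dsep_iff_of_restrict_causalModelOn (subset_univ _) hM (by simpa [eq_comm])
      (empty_subset _) (by simpa [eq_comm]) (by simpa) (disjoint_empty _) (disjoint_empty _)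
  refine DiGr.not_acyclic_of_dsep (a := ⟨0, by decide⟩) (b := ⟨1, by decide⟩)
    (c := ⟨3, by decide⟩) (d := ⟨4, by decide⟩) ?_ ?_ ?_ ?_ ?_ ?_ ?_ ?_ hD'
  · decide
  · decide
  · exact (transfer 0 1 _ _ (by decide)).1 (zigzagDAG_dsep (.inl rfl))
  · exact (transfer 0 4 _ _ (by decide)).1 (zigzagDAG_dsep (.inr (.inl rfl)))
  · exact (transfer 1 3 _ _ (by decide)).1 (zigzagDAG_dsep (.inr (.inr rfl)))
  · exact (transfer 0 3 _ _ (by decide)).not.1 (zigzagDAG_not_dsep (.inl rfl))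
  · exact (transfer 1 4 _ _ (by decide)).not.1 (zigzagDAG_not_dsep (.inr (.inl rfl)))
  · exact (transfer 3 4 _ _ (by decide)).not.1 (zigzagDAG_not_dsep (.inr (.inr rfl)))

/-- Graph-isomorphs are closed under sub-models, but causal models are not. -/
theorem stmt18 :
    (∀ (n : ℕ) (M : Set (Fin n) → Set (Fin n) → Set (Fin n) → Prop) (V : Set (Fin n)),
        IsGraphIsomorphOn Set.univ M → IsGraphIsomorphOn V (Restrict M V)) ∧
    ¬ (∀ (n : ℕ) (M : Set (Fin n) → Set (Fin n) → Set (Fin n) → Prop) (V : Set (Fin n)),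
        IsCausalOn Set.univ M → IsCausalOn V (Restrict M V)) :=
  ⟨fun _ _ V hM => hM.restrict (subset_univ V), not_forall_isCausalOn_restrict⟩
end

section
/- Let G = (U, E) be an undirected graph and V ⊆ U nonempty, and let G' = (V, E') with (α,β) ∈ E' iff some path in G from α to β has all internal vertices in U \ V. Then the graph-isomorph of G restricted to V equals the graph-isomorph of G': for all pairwise disjoint A, B, C ⊆ V, C separates A from B in G iff C separates A from B in G'. -/
/-!
Replacing every edge of a `G'`-walk by a `G`-walk whose interior avoids `V` gives a `G`-walk
whose vertices in `V` all lie on the `G'`-walk. Conversely, cutting a `G`-walk between vertices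
of `V` at its vertices in `V` gives segments with interior outside `V`, i.e. `G'`-edges, so the
vertices of `V` on it form a `G'`-walk. As `C ⊆ V`, a walk meets `C` iff its image does.
-/

namespace SimpleGraph.Walk

variable {U : Type*} {G G' : SimpleGraph U} {V : Set U} {u v w x : U}

def internalSupport (p : G.Walk u v) : List U := p.support.tail.dropLast

lemma mem_internalSupport_or_eq_of_mem_support_tail {p : G.Walk u v} (hw : w ∈ p.support.tail) :
    w ∈ p.internalSupport ∨ w = v := by
  cases p with
  | nil => simp at hw
  | cons _ q =>
    rw [support_cons, List.tail_cons, ← q.dropLast_support_concat, List.mem_append,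
      List.mem_singleton] at hw
    exact hw

lemma internalSupport_concat (p : G.Walk u v) (h : G.Adj v w) :
    (p.concat h).internalSupport = p.support.tail := by
  simp [internalSupport, support_concat, List.tail_append_of_ne_nil p.support_ne_nil]

theorem exists_walk_inter_support_subset
    (hG' : ∀ a b, G'.Adj a b → ∃ p : G.Walk a b, ∀ w ∈ p.internalSupport, w ∉ V)
    (q : G'.Walk u v) : ∃ p : G.Walk u v, ∀ w ∈ p.support, w ∈ V → w ∈ q.support := by
  induction q with
  | nil => exact ⟨nil, by simp⟩
  | @cons a b c hab q ih =>
    obtain ⟨p, hp⟩ := ih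
    obtain ⟨r, hr⟩ := hG' a b hab
    refine ⟨r.append p, fun w hw hwV => ?_⟩
    rw [mem_support_append_iff, ← r.cons_tail_support, List.mem_cons] at hw
    rcases hw with (rfl | hw) | hw
    · exact start_mem_support _
    · rcases mem_internalSupport_or_eq_of_mem_support_tail hw with hw | rfl
      · exact absurd hwV (hr w hw)
      · simp
    · simp [hp w hw hwV]

section

variable (hG' : ∀ a b, a ∈ V → b ∈ V → a ≠ b → ∀ p : G.Walk a b,
  (∀ w ∈ p.internalSupport, w ∉ V) → G'.Adj a b)
include hG'

/- `r` is the part of the `G`-walk already read since its last vertex `u` in `V`. -/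
theorem exists_walk_support_subset_cons (p : G.Walk x v) (hv : v ∈ V) (hu : u ∈ V)
    (r : G.Walk u x) (hr : ∀ w ∈ r.internalSupport, w ∉ V) :
    ∃ q : G'.Walk u v, q.support ⊆ u :: p.support := by
  induction p generalizing u with
  | @nil x =>
    by_cases hux : u = x
    · subst hux
      exact ⟨nil, by simp⟩
    · exact ⟨cons (hG' u x hu hv hux r hr) nil, by simp⟩
  | @cons x y v hxy p ih =>
    by_cases hx : x ∈ V
    · obtain ⟨q, hq⟩ := ih hv hx (cons hxy nil) (by simp [internalSupport])
      by_cases hux : u = x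
      · subst hux
        exact ⟨q, List.Subset.trans hq (by simp)⟩
      · refine ⟨cons (hG' u x hu hx hux r hr) q, ?_⟩
        simpa using List.Subset.trans hq (by simp)
    · have hr' : ∀ w ∈ (r.concat hxy).internalSupport, w ∉ V := fun w hw => by
        rw [internalSupport_concat] at hw
        rcases mem_internalSupport_or_eq_of_mem_support_tail hw with hw | rfl
        · exact hr w hw
        · exact hx
      obtain ⟨q, hq⟩ := ih hv hu (r.concat hxy) hr'
      exact ⟨q, List.Subset.trans hq (by simp)⟩

theorem exists_walk_support_subset (p : G.Walk u v) (hu : u ∈ V) (hv : v ∈ V) :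
    ∃ q : G'.Walk u v, q.support ⊆ p.support := by
  obtain ⟨q, hq⟩ := exists_walk_support_subset_cons hG' p hv hu nil (by simp [internalSupport])
  exact ⟨q, List.Subset.trans hq (List.cons_subset.2 ⟨p.start_mem_support, List.Subset.refl _⟩)⟩

end

end SimpleGraph.Walk

open SimpleGraph.Walk

theorem stmt19_general {U : Type} (G : SimpleGraph U) (V : Set U)
    (G' : SimpleGraph U)
    (hG' : ∀ α β : U, G'.Adj α β ↔ α ∈ V ∧ β ∈ V ∧ α ≠ β ∧
      ∃ p : G.Walk α β, ∀ w ∈ p.support.tail.dropLast, w ∉ V)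
    (A C B : Set U) (hA : A ⊆ V) (hC : C ⊆ V) (hB : B ⊆ V) :
    Separates G A C B ↔ Separates G' A C B := by
  constructor
  · intro hsep a ha b hb q
    obtain ⟨p, hp⟩ := exists_walk_inter_support_subset (fun α β h => ((hG' α β).1 h).2.2.2) q
    obtain ⟨w, hw, hwC⟩ := hsep a ha b hb p
    exact ⟨w, hp w hw (hC hwC), hwC⟩
  · intro hsep a ha b hb p
    obtain ⟨q, hq⟩ := exists_walk_support_subset
      (fun α β hα hβ hne r hr => (hG' α β).2 ⟨hα, hβ, hne, r, hr⟩) p (hA ha) (hB hb)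
    obtain ⟨w, hw, hwC⟩ := hsep a ha b hb q
    exact ⟨w, hq hw, hwC⟩

theorem stmt19 {U : Type} [Fintype U] (G : SimpleGraph U) (V : Set U)
    (hV : V.Nonempty) (G' : SimpleGraph U)
    (hG' : ∀ α β : U, G'.Adj α β ↔ α ∈ V ∧ β ∈ V ∧ α ≠ β ∧
      ∃ p : G.Walk α β, ∀ w ∈ p.support.tail.dropLast, w ∉ V)
    (A C B : Set U) (hA : A ⊆ V) (hC : C ⊆ V) (hB : B ⊆ V)
    (hAB : Disjoint A B) (hAC : Disjoint A C) (hBC : Disjoint B C) :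
    Separates G A C B ↔ Separates G' A C B :=
  stmt19_general G V G' hG' A C B hA hC hB
end
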